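/- Let (G = g ⊕ h, [·,·]_G) be a proto-twilled Leibniz algebra over a field K with component maps [·,·]_g, θ, [·,·]_h, η, ψR, ρL, ψL, ρR, and let r : h → g be a deformation map. Define the bilinear map ν_r on G by ν_r((x,u),(y,v)) = (ψR_r(x,v) + ψL_r(u,y), [u,v]_r). Then for every n ≥ 1, every multilinear map f : h^n → g with horizontal lift f̃ : G^n → G, f̃((x_1,u_1),…,(x_n,u_n)) = (f(u_1,…,u_n), 0), and all u_1,…,u_{n+1} ∈ h: ⟦ν_r, f̃⟧_B((0,u_1),…,(0,u_{n+1})) = ((−1)^{n−1} (δ_r f)(u_1,…,u_{n+1}), 0), where ⟦·,·⟧_B is the Balavoine bracket and δ_r is the coboundary of the deformation map r. -/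

import Mathlib

/-- `IsShuffle p σ` : the permutation `σ` of `Fin N` is a `(p, N-p)`-shuffle, i.e.
it is strictly increasing on the first `p` indices and on the remaining ones. -/
def IsShuffle {N : ℕ} (p : ℕ) (σ : Equiv.Perm (Fin N)) : Prop :=
  ∀ j k : Fin N, (j : ℕ) < (k : ℕ) →
    (((k : ℕ) < p → σ j < σ k) ∧ (p ≤ (j : ℕ) → σ j < σ k))

open Classical in
/-- The circle product `f ⋄ g` of an `(m+1)`-ary map `f` and an `(n+1)`-ary map
`g` on a module `W`. -/
noncomputable def diamond {W : Type*} [AddCommGroup W]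
    (m n : ℕ) (f : (Fin (m + 1) → W) → W) (g : (Fin (n + 1) → W) → W) :
    (Fin (m + n + 1) → W) → W :=
  fun x =>
    ∑ i : Fin (m + 1), ∑ σ : Equiv.Perm (Fin ((i : ℕ) + n)),
      if IsShuffle (i : ℕ) σ then
        ((-1 : ℤ) ^ ((i : ℕ) * n) * (Equiv.Perm.sign σ : ℤ)) •
          f (fun j : Fin (m + 1) =>
            if hj : (j : ℕ) < (i : ℕ) then
              x (Fin.castLE (by have := i.isLt; omega) (σ ⟨(j : ℕ), by omega⟩))
            else if (j : ℕ) = (i : ℕ) then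
              g (fun k : Fin (n + 1) =>
                if hk : (k : ℕ) < n then
                  x (Fin.castLE (by have := i.isLt; omega) (σ ⟨(i : ℕ) + (k : ℕ), by omega⟩))
                else x ⟨(i : ℕ) + n, by have := i.isLt; omega⟩)
            else x ⟨(j : ℕ) + n, by have := j.isLt; omega⟩)
      else 0

/-- The Balavoine bracket `⟦f,g⟧_B = f ⋄ g − (−1)^{mn} g ⋄ f` of an `(m+1)`-ary
map and an `(n+1)`-ary map. -/
noncomputable def bracketB {W : Type*} [AddCommGroup W]
    (m n : ℕ) (f : (Fin (m + 1) → W) → W) (g : (Fin (n + 1) → W) → W) :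
    (Fin (m + n + 1) → W) → W :=
  fun x =>
    diamond m n f g x -
      ((-1 : ℤ) ^ (m * n)) •
        diamond n m g f (fun j : Fin (n + m + 1) => x (Fin.cast (by omega) j))

/-- A `p`-ary map `F : W^p → W'` is multilinear over `K`. -/
def IsMultilinear (K : Type*) [Field K] {W W' : Type*} [AddCommGroup W] [Module K W]
    [AddCommGroup W'] [Module K W'] (p : ℕ) (F : (Fin p → W) → W') : Prop :=
  (∀ (x : Fin p → W) (i : Fin p) (a b : W),
      F (Function.update x i (a + b))
        = F (Function.update x i a) + F (Function.update x i b)) ∧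
  (∀ (x : Fin p → W) (i : Fin p) (c : K) (a : W),
      F (Function.update x i (c • a)) = c • F (Function.update x i a))

/-- The Loday–Pirashvili-type coboundary operator associated to the actions
`ψLr`, `ψRr` and the bracket `br`. -/
noncomputable def deltaR {g h : Type*} [AddCommGroup g]
    (ψLr : h → g → g) (ψRr : g → h → g) (br : h → h → h)
    (n : ℕ) (f : (Fin n → h) → g) : (Fin (n + 1) → h) → g :=
  fun u =>
    (∑ i : Fin n,
        ((-1 : ℤ) ^ (i : ℕ)) • ψLr (u i.castSucc) (f (u ∘ (i.castSucc).succAbove)))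
    + ((-1 : ℤ) ^ (n + 1)) • ψRr (f fun i : Fin n => u i.castSucc) (u (Fin.last n))
    + ∑ i : Fin (n + 1), ∑ j : Fin (n + 1),
        if hij : (i : ℕ) < (j : ℕ) then
          ((-1 : ℤ) ^ ((i : ℕ) + 1)) •
            f (Function.update (u ∘ i.succAbove)
                ⟨(j : ℕ) - 1, by have := j.isLt; omega⟩ (br (u i) (u j)))
        else 0

section Helpers

lemma cycleRange_val' {n : ℕ} (i j : Fin n) :
    ((Fin.cycleRange i j : Fin n) : ℕ)
      = if (j:ℕ) < (i:ℕ) then (j:ℕ)+1 else if (j:ℕ) = (i:ℕ) then 0 else (j:ℕ) := by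
  cases n with
  | zero => exact j.elim0
  | succ m =>
    rcases lt_trichotomy (j:ℕ) (i:ℕ) with h|h|h
    · rw [Fin.coe_cycleRange_of_lt (Fin.lt_def.mpr h), if_pos h]
    · rw [Fin.cycleRange_of_eq (Fin.ext h), if_neg (by omega), if_pos h, Fin.val_zero]
    · rw [Fin.cycleRange_of_gt (Fin.lt_def.mpr h), if_neg (by omega), if_neg (by omega)]

lemma cycleRange_inv_val {n : ℕ} (s j : Fin n) :
    (((Fin.cycleRange s)⁻¹ j : Fin n) : ℕ)
      = if (j:ℕ) = 0 then (s:ℕ) else if (j:ℕ) ≤ (s:ℕ) then (j:ℕ) - 1 else (j:ℕ) := by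
  have hs := s.isLt
  have hj := j.isLt
  set k : Fin n := if hc : (j:ℕ) = 0 then s
    else if h2 : (j:ℕ) ≤ (s:ℕ) then ⟨(j:ℕ) - 1, by omega⟩ else j with hk
  have hkv : (k:ℕ) = if (j:ℕ) = 0 then (s:ℕ) else if (j:ℕ) ≤ (s:ℕ) then (j:ℕ) - 1 else (j:ℕ) := by
    rw [hk]; split_ifs <;> simp
  have h3 : Fin.cycleRange s k = j := by
    apply Fin.ext
    rw [cycleRange_val', hkv]
    split_ifs <;> omega
  have h4 : (Fin.cycleRange s)⁻¹ j = k := by rw [← h3, Equiv.Perm.inv_def, Equiv.symm_apply_apply]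
  rw [h4, hkv]

lemma strictMono_perm_eq_one {n : ℕ} (σ : Equiv.Perm (Fin n)) (h : StrictMono σ) : σ = 1 := by
  have := (StrictMono.range_inj h (strictMono_id (α := Fin n))).mp
    (by rw [Set.range_id]; exact Set.range_eq_univ.mpr σ.surjective)
  exact Equiv.ext (fun j => congrFun this j)

open Classical in
lemma sum_isShuffle_zero {N : ℕ} {M : Type*} [AddCommMonoid M] (T : Equiv.Perm (Fin N) → M) :
    (∑ σ : Equiv.Perm (Fin N), if IsShuffle 0 σ then T σ else 0) = T 1 := by
  rw [Finset.sum_eq_single 1]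
  · rw [if_pos]
    intro j k hjk
    exact ⟨fun h => absurd h (by omega), fun _ => Fin.lt_def.mpr hjk⟩
  · intro σ _ hσ
    rw [if_neg]
    intro hsh
    exact hσ (strictMono_perm_eq_one σ (fun j k hjk => (hsh j k (Fin.lt_def.mp hjk)).2 (Nat.zero_le _)))
  · intro h; exact absurd (Finset.mem_univ 1) h

lemma shuffle_one_unique {N : ℕ} (hN : 0 < N) (σ τ : Equiv.Perm (Fin N))
    (hσ : IsShuffle 1 σ) (hτ : IsShuffle 1 τ) (h0 : σ ⟨0, hN⟩ = τ ⟨0, hN⟩) : σ = τ := by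
  obtain ⟨m, rfl⟩ : ∃ m, N = m + 1 := ⟨N - 1, by omega⟩
  set z : Fin (m+1) := ⟨0, hN⟩ with hz
  have key : ∀ (ρ : Equiv.Perm (Fin (m+1))), IsShuffle 1 ρ →
      Set.range (fun j : Fin m => ρ ⟨(j:ℕ)+1, by omega⟩) = {y | y ≠ ρ z} := by
    intro ρ hρ
    ext y
    constructor
    · rintro ⟨j, rfl⟩
      simp only [Set.mem_setOf_eq]
      intro hcon
      have := ρ.injective hcon
      simp [Fin.ext_iff, hz] at this
    · intro hy
      have hw : ρ⁻¹ y ≠ z := by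
        intro hc
        apply hy
        rw [← hc, Equiv.Perm.inv_def, Equiv.apply_symm_apply]
      have hw1 : 1 ≤ ((ρ⁻¹ y : Fin (m+1)) : ℕ) := by
        rcases Nat.eq_zero_or_pos ((ρ⁻¹ y : Fin (m+1)) : ℕ) with h|h
        · exact absurd (Fin.ext h) hw
        · exact h
      refine ⟨⟨(ρ⁻¹ y : Fin (m+1)) - 1, by have := (ρ⁻¹ y).isLt; omega⟩, ?_⟩
      show ρ _ = y
      have : (⟨((ρ⁻¹ y : Fin (m+1)) : ℕ) - 1 + 1, by have := (ρ⁻¹ y).isLt; omega⟩ : Fin (m+1)) = ρ⁻¹ y := by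
        apply Fin.ext; simp only [Fin.val_mk]; omega
      rw [this, Equiv.Perm.inv_def, Equiv.apply_symm_apply]
  have mono : ∀ (ρ : Equiv.Perm (Fin (m+1))), IsShuffle 1 ρ →
      StrictMono (fun j : Fin m => ρ ⟨(j:ℕ)+1, by omega⟩) := by
    intro ρ hρ j k hjk
    exact (hρ _ _ (by simpa using Fin.lt_def.mp hjk)).2 (by simp)
  have := (StrictMono.range_inj (mono σ hσ) (mono τ hτ)).mp
    (by rw [key σ hσ, key τ hτ, h0])
  apply Equiv.ext
  intro j
  rcases Nat.eq_zero_or_pos (j : ℕ) with h|h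
  · have : j = z := Fin.ext h
    rw [this, h0]
  · have hj : j = ⟨((j:ℕ) - 1) + 1, by have := j.isLt; omega⟩ := by apply Fin.ext; simp; omega
    rw [hj]
    exact congrFun this ⟨(j:ℕ)-1, by have := j.isLt; omega⟩

lemma shuffle_one_cycleRange_inv {N : ℕ} (s : Fin N) : IsShuffle 1 (Fin.cycleRange s)⁻¹ := by
  intro j k hjk
  constructor
  · omega
  · intro hj
    rw [Fin.lt_def, cycleRange_inv_val, cycleRange_inv_val]
    have := s.isLt
    split_ifs <;> omega

open Classical in
lemma sum_isShuffle_one {N : ℕ} (hN : 0 < N) {M : Type*} [AddCommMonoid M]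
    (T : Equiv.Perm (Fin N) → M) :
    (∑ σ : Equiv.Perm (Fin N), if IsShuffle 1 σ then T σ else 0)
      = ∑ s : Fin N, T (Fin.cycleRange s)⁻¹ := by
  rw [← Finset.sum_filter]
  have hval : ∀ s : Fin N, (Fin.cycleRange s)⁻¹ ⟨0, hN⟩ = s := by
    intro s; apply Fin.ext; rw [cycleRange_inv_val]; simp
  refine Finset.sum_nbij' (fun σ => σ ⟨0, hN⟩) (fun s => (Fin.cycleRange s)⁻¹)
    (fun _ _ => Finset.mem_univ _)
    (fun s _ => Finset.mem_filter.mpr ⟨Finset.mem_univ _, shuffle_one_cycleRange_inv s⟩)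
    (fun σ hσ => ?_) (fun s _ => hval s) (fun σ hσ => ?_)
  · exact shuffle_one_unique hN _ _ (shuffle_one_cycleRange_inv _)
      ((Finset.mem_filter.mp hσ).2) (hval _)
  · rw [shuffle_one_unique hN _ _ (shuffle_one_cycleRange_inv _)
      ((Finset.mem_filter.mp hσ).2) (hval _)]

noncomputable def lastShuffle {i : ℕ} (s : Fin (i+1)) : Equiv.Perm (Fin (i+1)) :=
  Fin.revPerm * (Fin.cycleRange s.rev)⁻¹ * Fin.revPerm

lemma lastShuffle_val {i : ℕ} (s : Fin (i+1)) (j : Fin (i+1)) :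
    ((lastShuffle s j : Fin (i+1)) : ℕ)
      = if (j:ℕ) = i then (s:ℕ) else if (j:ℕ) < (s:ℕ) then (j:ℕ) else (j:ℕ)+1 := by
  have hs := s.isLt
  have hj := j.isLt
  have h0 : lastShuffle s j = Fin.revPerm ((Fin.cycleRange s.rev)⁻¹ (Fin.revPerm j)) := rfl
  rw [h0]
  simp only [Fin.revPerm_apply, Fin.val_rev, cycleRange_inv_val]
  split_ifs <;> omega

lemma lastShuffle_sign {i : ℕ} (s : Fin (i+1)) :
    (Equiv.Perm.sign (lastShuffle s) : ℤ) = (-1 : ℤ) ^ (i - (s:ℕ)) := by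
  have h1 : Equiv.Perm.sign (lastShuffle s)
      = Equiv.Perm.sign (Fin.revPerm (n := i+1)) * Equiv.Perm.sign (Fin.cycleRange s.rev)
        * Equiv.Perm.sign (Fin.revPerm (n := i+1)) := by
    rw [lastShuffle, map_mul, map_mul, Equiv.Perm.sign_inv]
  have h2 : ∀ a b : ℤˣ, a * b * a = b * (a * a) := by
    intro a b; rw [mul_comm a b, mul_assoc]
  rw [h1, h2]
  have hrr : (Fin.revPerm (n := i+1)) * (Fin.revPerm (n := i+1)) = 1 := by
    apply Equiv.ext; intro j; simp
  rw [← map_mul, hrr, map_one, mul_one, Fin.sign_cycleRange]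
  have : (s.rev : ℕ) = i - (s:ℕ) := by rw [Fin.val_rev]; omega
  rw [this]
  push_cast
  rfl

lemma lastShuffle_isShuffle {i : ℕ} (s : Fin (i+1)) : IsShuffle i (lastShuffle s) := by
  intro j k hjk
  have hk := k.isLt
  constructor
  · intro hki
    rw [Fin.lt_def, lastShuffle_val, lastShuffle_val]
    split_ifs <;> omega
  · intro hij
    omega

lemma lastShuffle_last {i : ℕ} (s : Fin (i+1)) : lastShuffle s (Fin.last i) = s := by
  apply Fin.ext; rw [lastShuffle_val]; simp

lemma shuffle_last_unique {i : ℕ} (σ τ : Equiv.Perm (Fin (i+1)))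
    (hσ : IsShuffle i σ) (hτ : IsShuffle i τ) (h0 : σ (Fin.last i) = τ (Fin.last i)) : σ = τ := by
  have key : ∀ (ρ : Equiv.Perm (Fin (i+1))), IsShuffle i ρ →
      Set.range (fun j : Fin i => ρ j.castSucc) = {y | y ≠ ρ (Fin.last i)} := by
    intro ρ hρ
    ext y
    constructor
    · rintro ⟨j, rfl⟩
      simp only [Set.mem_setOf_eq]
      intro hcon
      have h1 := ρ.injective hcon
      have h2 := j.isLt
      simp [Fin.ext_iff] at h1
      omega
    · intro hy
      have hw : ρ⁻¹ y ≠ Fin.last i := by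
        intro hc
        apply hy
        rw [← hc, Equiv.Perm.inv_def, Equiv.apply_symm_apply]
      have hw1 : ((ρ⁻¹ y : Fin (i+1)) : ℕ) < i := by
        have h1 := (ρ⁻¹ y).isLt
        rcases Nat.lt_or_ge ((ρ⁻¹ y : Fin (i+1)) : ℕ) i with h|h
        · exact h
        · exact absurd (Fin.ext (by simp only [Fin.val_last]; omega)) hw
      refine ⟨⟨(ρ⁻¹ y : Fin (i+1)), hw1⟩, ?_⟩
      show ρ _ = y
      have : (Fin.castSucc (⟨(ρ⁻¹ y : Fin (i+1)), hw1⟩ : Fin i)) = ρ⁻¹ y := by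
        apply Fin.ext; simp
      rw [this, Equiv.Perm.inv_def, Equiv.apply_symm_apply]
  have mono : ∀ (ρ : Equiv.Perm (Fin (i+1))), IsShuffle i ρ →
      StrictMono (fun j : Fin i => ρ j.castSucc) := by
    intro ρ hρ j k hjk
    refine (hρ _ _ (by simpa using Fin.lt_def.mp hjk)).1 (by simp)
  have heq := (StrictMono.range_inj (mono σ hσ) (mono τ hτ)).mp
    (by rw [key σ hσ, key τ hτ, h0])
  apply Equiv.ext
  intro j
  rcases Nat.lt_or_ge (j : ℕ) i with h|h
  · have hj : j = Fin.castSucc ⟨(j:ℕ), h⟩ := by apply Fin.ext; simp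
    rw [hj]
    exact congrFun heq ⟨(j:ℕ), h⟩
  · have : j = Fin.last i := by apply Fin.ext; have := j.isLt; simp; omega
    rw [this, h0]

open Classical in
lemma sum_isShuffle_last {i : ℕ} {M : Type*} [AddCommMonoid M]
    (T : Equiv.Perm (Fin (i+1)) → M) :
    (∑ σ : Equiv.Perm (Fin (i+1)), if IsShuffle i σ then T σ else 0)
      = ∑ s : Fin (i+1), T (lastShuffle s) := by
  rw [← Finset.sum_filter]
  refine Finset.sum_nbij' (fun σ => σ (Fin.last i)) (fun s => lastShuffle s)
    (fun _ _ => Finset.mem_univ _)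
    (fun s _ => Finset.mem_filter.mpr ⟨Finset.mem_univ _, lastShuffle_isShuffle s⟩)
    (fun σ hσ => ?_) (fun s _ => lastShuffle_last s) (fun σ hσ => ?_)
  · exact shuffle_last_unique _ _ (lastShuffle_isShuffle _)
      ((Finset.mem_filter.mp hσ).2) (lastShuffle_last _)
  · rw [shuffle_last_unique _ _ (lastShuffle_isShuffle _)
      ((Finset.mem_filter.mp hσ).2) (lastShuffle_last _)]

end Helpers
/-- a pair as a function on `Fin 2`. -/
def fpair {W : Type*} (a b : W) : Fin 2 → W := fun j => if (j:ℕ) = 0 then a else b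

lemma fpair_eval {W : Type*} (a b : W) (j : Fin 2) :
    fpair a b j = if (j:ℕ) = 0 then a else b := rfl

section DiamondEval
variable {W : Type*} [AddCommGroup W]

lemma diamond_one_eval (n0 : ℕ) (F2 : (Fin 2 → W) → W)
    (G : (Fin (n0+1) → W) → W) (x : Fin (1 + n0 + 1) → W) :
    diamond 1 n0 F2 G x
      = F2 (fpair (G (fun k : Fin (n0+1) => x ⟨(k:ℕ), by have := k.isLt; omega⟩))
            (x ⟨1+n0, by omega⟩))
        + ∑ s : Fin (1+n0), ((-1:ℤ)^(n0 + (s:ℕ))) •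
            F2 (fpair (x ⟨(s:ℕ), by have := s.isLt; omega⟩)
              (G (fun k : Fin (n0+1) =>
                if (k:ℕ) < n0 then
                  (if (k:ℕ)+1 ≤ (s:ℕ) then x ⟨(k:ℕ), by have := k.isLt; omega⟩
                   else x ⟨(k:ℕ)+1, by have := k.isLt; omega⟩)
                else x ⟨1+n0, by omega⟩))) := by
  rw [diamond, Fin.sum_univ_two]
  simp only [Fin.val_zero, Fin.val_one, Fin.isValue]
  rw [sum_isShuffle_zero, sum_isShuffle_one (by omega)]
  congr 1
  · have hc : ((-1 : ℤ) ^ (0 * n0) * ((Equiv.Perm.sign (1 : Equiv.Perm (Fin (0 + n0)))) : ℤ)) = 1 := by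
      simp
    rw [hc, one_smul]
    apply congrArg F2
    funext j
    rcases j with ⟨jv, hjv⟩
    rw [fpair_eval]
    by_cases h0 : jv = 0
    · subst h0
      rw [dif_neg (by simp only [Fin.val_mk]; omega), if_pos rfl, if_pos rfl]
      apply congrArg G
      funext k
      have hk2 := k.isLt
      by_cases hk : (k:ℕ) < n0
      · rw [dif_pos hk]
        exact congrArg x (Fin.ext (by
          simp only [Fin.coe_castLE, Equiv.Perm.one_apply, Fin.val_mk]
          omega))
      · rw [dif_neg hk]
        exact congrArg x (Fin.ext (by simp only [Fin.val_mk]; omega))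
    · have h1 : jv = 1 := by omega
      subst h1
      rw [dif_neg (by simp only [Fin.val_mk]; omega), if_neg (by simp only [Fin.val_mk]; omega), if_neg (by simp only [Fin.val_mk]; omega)]
  · apply Finset.sum_congr rfl
    intro s _
    have hs := s.isLt
    have hc : ((-1 : ℤ) ^ (1 * n0) * ((Equiv.Perm.sign ((Fin.cycleRange s)⁻¹)) : ℤ))
        = (-1:ℤ)^(n0 + (s:ℕ)) := by
      rw [Equiv.Perm.sign_inv, Fin.sign_cycleRange, one_mul, pow_add]
      simp [Units.val_pow_eq_pow_val]
    rw [hc]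
    apply congrArg (((-1:ℤ)^(n0 + (s:ℕ))) • ·)
    apply congrArg F2
    funext j
    rcases j with ⟨jv, hjv⟩
    rw [fpair_eval]
    by_cases h0 : jv = 0
    · subst h0
      rw [dif_pos (by simp only [Fin.val_mk]; omega), if_pos rfl]
      exact congrArg x (Fin.ext (by
        simp only [Fin.coe_castLE, cycleRange_inv_val, Fin.val_mk]
        split_ifs <;> omega))
    · have h1 : jv = 1 := by omega
      subst h1
      rw [dif_neg (by simp only [Fin.val_mk]; omega), if_pos rfl, if_neg (by simp only [Fin.val_mk]; omega)]
      apply congrArg G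
      funext k
      have hk2 := k.isLt
      by_cases hk : (k:ℕ) < n0
      · rw [dif_pos hk, if_pos hk]
        by_cases hks : (k:ℕ)+1 ≤ (s:ℕ)
        · rw [if_pos hks]
          exact congrArg x (Fin.ext (by
            simp only [Fin.coe_castLE, cycleRange_inv_val, Fin.val_mk]
            split_ifs <;> omega))
        · rw [if_neg hks]
          exact congrArg x (Fin.ext (by
            simp only [Fin.coe_castLE, cycleRange_inv_val, Fin.val_mk]
            split_ifs <;> omega))
      · rw [dif_neg hk, if_neg hk]

lemma diamond_last_eval (n0 : ℕ) (G : (Fin (n0+1) → W) → W)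
    (F2 : (Fin 2 → W) → W) (y : Fin (n0 + 1 + 1) → W) :
    diamond n0 1 G F2 y
      = ∑ i : Fin (n0+1), ∑ s : Fin ((i:ℕ)+1),
          ((-1:ℤ)^((i:ℕ) + ((i:ℕ) - (s:ℕ)))) •
            G (fun j : Fin (n0+1) =>
                if (j:ℕ) < (s:ℕ) then y ⟨(j:ℕ), by have := j.isLt; omega⟩
                else if (j:ℕ) < (i:ℕ) then y ⟨(j:ℕ)+1, by have := j.isLt; omega⟩
                else if (j:ℕ) = (i:ℕ) then
                  F2 (fpair (y ⟨(s:ℕ), by have := s.isLt; have := i.isLt; omega⟩)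
                    (y ⟨(i:ℕ)+1, by have := i.isLt; omega⟩))
                else y ⟨(j:ℕ)+1, by have := j.isLt; omega⟩) := by
  rw [diamond]
  apply Finset.sum_congr rfl
  intro i _
  have hi := i.isLt
  rw [sum_isShuffle_last]
  apply Finset.sum_congr rfl
  intro s _
  have hs := s.isLt
  have hc : ((-1 : ℤ) ^ ((i:ℕ) * 1) * ((Equiv.Perm.sign (lastShuffle s)) : ℤ))
      = (-1:ℤ)^((i:ℕ) + ((i:ℕ) - (s:ℕ))) := by
    rw [lastShuffle_sign, mul_one, pow_add]
  rw [hc]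
  apply congrArg (((-1:ℤ)^((i:ℕ) + ((i:ℕ) - (s:ℕ)))) • ·)
  apply congrArg G
  funext j
  have hj := j.isLt
  by_cases hji : (j:ℕ) < (i:ℕ)
  · rw [dif_pos hji]
    by_cases hjs : (j:ℕ) < (s:ℕ)
    · rw [if_pos hjs]
      exact congrArg y (Fin.ext (by
        simp only [Fin.coe_castLE, lastShuffle_val, Fin.val_mk]
        split_ifs <;> omega))
    · rw [if_neg hjs, if_pos hji]
      exact congrArg y (Fin.ext (by
        simp only [Fin.coe_castLE, lastShuffle_val, Fin.val_mk]
        split_ifs <;> omega))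
  · rw [dif_neg hji]
    by_cases hjei : (j:ℕ) = (i:ℕ)
    · rw [if_pos hjei, if_neg (by omega), if_neg (by omega), if_pos hjei]
      apply congrArg F2
      funext k
      rcases k with ⟨kv, hkv⟩
      rw [fpair_eval]
      by_cases hk0 : kv = 0
      · subst hk0
        rw [dif_pos (by simp only [Fin.val_mk]; omega), if_pos rfl]
        exact congrArg y (Fin.ext (by
          simp only [Fin.coe_castLE, lastShuffle_val, Fin.val_mk]
          split_ifs <;> omega))
      · have h1 : kv = 1 := by omega
        subst h1
        rw [dif_neg (by simp only [Fin.val_mk]; omega), if_neg (by simp only [Fin.val_mk]; omega)]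
    · rw [if_neg hjei, if_neg (by omega), if_neg (by omega), if_neg hjei]

end DiamondEval
lemma succAbove_val {n : ℕ} (p : Fin (n+1)) (k : Fin n) :
    ((p.succAbove k : Fin (n+1)) : ℕ) = if (k:ℕ) < (p:ℕ) then (k:ℕ) else (k:ℕ)+1 := by
  by_cases hc : (k:ℕ) < (p:ℕ)
  · rw [Fin.succAbove_of_castSucc_lt _ _ (by rw [Fin.lt_def, Fin.coe_castSucc]; exact hc),
      Fin.coe_castSucc, if_pos hc]
  · rw [Fin.succAbove_of_le_castSucc _ _ (by rw [Fin.le_def, Fin.coe_castSucc]; omega),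
      Fin.val_succ, if_neg hc]

lemma sum_pair_zero {α : Type*} {G H : Type*} [AddCommGroup G] [AddCommGroup H]
    (S : Finset α) (t : α → G) : (∑ a ∈ S, (t a, (0:H))) = (∑ a ∈ S, t a, 0) := by
  refine Prod.ext ?_ ?_ <;> simp [Prod.fst_sum, Prod.snd_sum]

lemma neg_one_pow_parity (m k : ℕ) (hpar : m % 2 = k % 2) : ((-1:ℤ))^m = (-1:ℤ)^k := by
  rcases Nat.even_or_odd m with hm|hm
  · have hk : Even k := by rcases hm with ⟨t, ht⟩; exact ⟨k/2, by omega⟩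
    rw [Even.neg_one_pow hm, Even.neg_one_pow hk]
  · have hk : Odd k := by rcases hm with ⟨t, ht⟩; exact ⟨k/2, by omega⟩
    rw [Odd.neg_one_pow hm, Odd.neg_one_pow hk]
/-- For a deformation map `r` in a proto-twilled Leibniz algebra, with
`ν_r((x,u),(y,v)) = (ψR_r(x,v) + ψL_r(u,y), [u,v]_r)`, the Balavoine bracket of
`ν_r` with the horizontal lift `f̃` of a multilinear map `f : h^n → g` (`n ≥ 1`),
evaluated on a tuple `((0,u_1),…,(0,u_{n+1}))`, equals
`((−1)^{n−1} (δ_r f)(u_1,…,u_{n+1}), 0)`. -/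
theorem bracketB_nu_r_eq_coboundary
    (K : Type*) [Field K] (g h : Type*)
    [AddCommGroup g] [Module K g] [AddCommGroup h] [Module K h]
    (bg : g →ₗ[K] g →ₗ[K] g) (θ : g →ₗ[K] g →ₗ[K] h)
    (bh : h →ₗ[K] h →ₗ[K] h) (η : h →ₗ[K] h →ₗ[K] g)
    (ψR : g →ₗ[K] h →ₗ[K] g) (ρL : g →ₗ[K] h →ₗ[K] h)
    (ψL : h →ₗ[K] g →ₗ[K] g) (ρR : h →ₗ[K] g →ₗ[K] h)
    (BG : g × h → g × h → g × h)
    (hBG : ∀ (x y : g) (u v : h),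
      BG (x, u) (y, v) = (bg x y + ψR x v + ψL u y + η u v,
                          bh u v + ρL x v + ρR u y + θ x y))
    (leibG : ∀ a b c : g × h, BG a (BG b c) = BG (BG a b) c + BG b (BG a c))
    (r : h →ₗ[K] g)
    (hr : ∀ u v : h,
      bg (r u) (r v) + ψR (r u) v + ψL u (r v) + η u v
        = r (bh u v + ρL (r u) v + ρR u (r v) + θ (r u) (r v)))
    (br : h → h → h)
    (hbr : ∀ u v : h, br u v = bh u v + ρL (r u) v + ρR u (r v) + θ (r u) (r v))
    (ψLr : h → g → g)
    (hψLr : ∀ (u : h) (x : g),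
      ψLr u x = ψL u x + bg (r u) x - r (ρR u x + θ (r u) x))
    (ψRr : g → h → g)
    (hψRr : ∀ (x : g) (u : h),
      ψRr x u = ψR x u + bg x (r u) - r (ρL x u + θ x (r u)))
    (νr : g × h → g × h → g × h)
    (hνr : ∀ p q : g × h, νr p q = (ψRr p.1 q.2 + ψLr p.2 q.1, br p.2 q.2)) :
    ∀ (n0 : ℕ) (f : (Fin (n0 + 1) → h) → g), IsMultilinear K (n0 + 1) f →
      ∀ u : Fin (n0 + 2) → h,
        bracketB 1 n0 (fun x : Fin 2 → g × h => νr (x 0) (x 1))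
            (fun x : Fin (n0 + 1) → g × h => ((f fun i => (x i).2), (0 : h)))
            (fun i : Fin (1 + n0 + 1) => ((0 : g), u (Fin.cast (by omega) i)))
          = (((-1 : ℤ) ^ n0) • deltaR ψLr ψRr br (n0 + 1) f u, 0) := by
  intro n0 f hf u
  have hν1 : ∀ (a : g) (v : h), νr (a, 0) (0, v) = (ψRr a v, 0) := by
    intro a v
    rw [hνr]
    simp [hψRr, hψLr, hbr]
  have hν2 : ∀ (w : h) (a : g), νr (0, w) (a, 0) = (ψLr w a, 0) := by
    intro w a
    rw [hνr]
    simp [hψRr, hψLr, hbr]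
  have hν3 : ∀ (w v : h), νr (0, w) (0, v) = (0, br w v) := by
    intro w v
    rw [hνr]
    simp [hψRr, hψLr, hbr]
  rw [bracketB, diamond_one_eval, diamond_last_eval]
  have h10 : ((1:ℕ) = 0) = False := by simp
  simp only [fpair_eval, Fin.cast_mk, Fin.val_zero, Fin.val_one, reduceIte, h10, if_false,
    hν3, apply_ite Prod.snd, hν1, hν2]
  simp only [Prod.smul_mk, smul_zero, sum_pair_zero, Prod.mk_add_mk, Prod.mk_sub_mk,
    add_zero, sub_zero]
  simp only [Prod.mk.injEq]
  refine ⟨?_, trivial⟩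
  rw [deltaR, smul_add, smul_add]
  have h1 : ψRr (f fun i : Fin (n0+1) => u ⟨(i:ℕ), by have := i.isLt; omega⟩)
        (u ⟨1+n0, by omega⟩)
      = (-1:ℤ)^n0 • ((-1:ℤ)^(n0+1+1) •
          ψRr (f fun i : Fin (n0+1) => u i.castSucc) (u (Fin.last (n0+1)))) := by
    rw [smul_smul, ← pow_add]
    have he : ((-1:ℤ))^(n0 + (n0+1+1)) = 1 := by
      rw [neg_one_pow_parity (n0+(n0+1+1)) 0 (by omega), pow_zero]
    rw [he, one_smul]
    have e1 : (fun i : Fin (n0+1) => u ⟨(i:ℕ), by have := i.isLt; omega⟩)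
        = (fun i : Fin (n0+1) => u i.castSucc) := by
      funext i
      exact congrArg u (Fin.ext (by simp only [Fin.val_mk, Fin.coe_castSucc]))
    have e2 : u ⟨1+n0, by omega⟩ = u (Fin.last (n0+1)) := by
      exact congrArg u (Fin.ext (by simp only [Fin.val_mk, Fin.val_last]; omega))
    rw [e1, e2]
  have h2 : (∑ a : Fin (1+n0), ((-1:ℤ))^(n0 + (a:ℕ)) •
        ψLr (u ⟨(a:ℕ), by have := a.isLt; omega⟩)
          (f fun i : Fin (n0+1) =>
            if (i:ℕ) < n0 then
              (if (i:ℕ)+1 ≤ (a:ℕ) then u ⟨(i:ℕ), by have := i.isLt; omega⟩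
               else u ⟨(i:ℕ)+1, by have := i.isLt; omega⟩)
            else u ⟨1+n0, by omega⟩))
      = (-1:ℤ)^n0 • ∑ i : Fin (n0+1), ((-1:ℤ))^(i:ℕ) •
          ψLr (u i.castSucc) (f (u ∘ (i.castSucc).succAbove)) := by
    rw [Finset.smul_sum]
    apply Fintype.sum_equiv (finCongr (by omega : 1+n0 = n0+1))
    intro a
    have ha := a.isLt
    rw [smul_smul, ← pow_add]
    have hval : ((finCongr (by omega : 1+n0 = n0+1) a : Fin (n0+1)) : ℕ) = (a:ℕ) := by simp
    rw [hval]
    have e1 : u ⟨(a:ℕ), by have := a.isLt; omega⟩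
        = u ((finCongr (by omega : 1+n0 = n0+1) a).castSucc) := by
      exact congrArg u (Fin.ext (by simp only [Fin.val_mk, Fin.coe_castSucc]; rw [hval]))
    have e2 : (fun i : Fin (n0+1) =>
            if (i:ℕ) < n0 then
              (if (i:ℕ)+1 ≤ (a:ℕ) then u ⟨(i:ℕ), by have := i.isLt; omega⟩
               else u ⟨(i:ℕ)+1, by have := i.isLt; omega⟩)
            else u ⟨1+n0, by omega⟩)
        = u ∘ ((finCongr (by omega : 1+n0 = n0+1) a).castSucc).succAbove := by
      funext k
      have hk := k.isLt
      simp only [Function.comp_apply]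
      by_cases hkn : (k:ℕ) < n0
      · by_cases hks : (k:ℕ)+1 ≤ (a:ℕ)
        · rw [if_pos hkn, if_pos hks]
          refine congrArg u (Fin.ext ?_)
          rw [succAbove_val, Fin.coe_castSucc, hval]
          simp only [Fin.val_mk]
          split_ifs <;> omega
        · rw [if_pos hkn, if_neg hks]
          refine congrArg u (Fin.ext ?_)
          rw [succAbove_val, Fin.coe_castSucc, hval]
          simp only [Fin.val_mk]
          split_ifs <;> omega
      · rw [if_neg hkn]
        refine congrArg u (Fin.ext ?_)
        rw [succAbove_val, Fin.coe_castSucc, hval]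
        simp only [Fin.val_mk]
        split_ifs <;> omega
    rw [e1, e2]
  have h3 : ((-1:ℤ))^(1*n0) • (∑ a : Fin (n0+1), ∑ b : Fin ((a:ℕ)+1),
        ((-1:ℤ))^((a:ℕ) + ((a:ℕ) - (b:ℕ))) •
          f (fun i : Fin (n0+1) =>
            if (i:ℕ) < (b:ℕ) then u ⟨(i:ℕ), by have := i.isLt; omega⟩
            else if (i:ℕ) < (a:ℕ) then u ⟨(i:ℕ)+1, by have := i.isLt; omega⟩
            else if (i:ℕ) = (a:ℕ) then
              br (u ⟨(b:ℕ), by have := b.isLt; have := a.isLt; omega⟩)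
                 (u ⟨(a:ℕ)+1, by have := a.isLt; omega⟩)
            else u ⟨(i:ℕ)+1, by have := i.isLt; omega⟩))
      = -((-1:ℤ)^n0 • ∑ i : Fin (n0+1+1), ∑ j : Fin (n0+1+1),
          (if hij : (i:ℕ) < (j:ℕ) then ((-1:ℤ))^((i:ℕ)+1) •
            f (Function.update (u ∘ i.succAbove)
                ⟨(j:ℕ) - 1, by have := j.isLt; omega⟩ (br (u i) (u j)))
           else 0)) := by
    rw [← neg_smul]
    have hc : -((-1:ℤ)^n0) = (-1:ℤ)^(n0+1) := by rw [pow_succ, mul_neg_one]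
    rw [hc]
    simp only [Finset.smul_sum, smul_dite, smul_zero, smul_smul, dite_eq_ite]
    rw [Finset.sum_sigma']
    rw [← Finset.sum_product']
    have hdite : ∀ p : Fin (n0+1+1) × Fin (n0+1+1),
        (if h_1 : (p.1:ℕ) < (p.2:ℕ) then
          (((-1:ℤ))^(n0+1) * ((-1:ℤ))^((p.1:ℕ)+1)) •
            f (Function.update (u ∘ p.1.succAbove)
              ⟨(p.2:ℕ)-1, by have := p.2.isLt; omega⟩ (br (u p.1) (u p.2)))
         else 0)
        = (if (p.1:ℕ) < (p.2:ℕ) then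
          (((-1:ℤ))^(n0+1) * ((-1:ℤ))^((p.1:ℕ)+1)) •
            f (Function.update (u ∘ p.1.succAbove)
              ⟨(p.2:ℕ)-1, by have := p.2.isLt; omega⟩ (br (u p.1) (u p.2)))
         else 0) := by
      intro p
      by_cases hp : (p.1:ℕ) < (p.2:ℕ)
      · rw [dif_pos hp, if_pos hp]
      · rw [dif_neg hp, if_neg hp]
    simp only [hdite]
    rw [← Finset.sum_filter]
    refine Finset.sum_nbij'
      (fun x : Σ a : Fin (n0+1), Fin ((a:ℕ)+1) =>
        ((⟨(x.2:ℕ), by have := x.2.isLt; have := x.1.isLt; omega⟩ : Fin (n0+1+1)),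
         (⟨(x.1:ℕ)+1, by have := x.1.isLt; omega⟩ : Fin (n0+1+1))))
      (fun p : Fin (n0+1+1) × Fin (n0+1+1) =>
        if hp : (p.1:ℕ) < (p.2:ℕ) ∧ (p.2:ℕ) < n0+2 then
          (⟨⟨(p.2:ℕ)-1, by omega⟩, ⟨(p.1:ℕ), by simp only [Fin.val_mk]; omega⟩⟩ : Σ a : Fin (n0+1), Fin ((a:ℕ)+1))
        else ⟨⟨0, by omega⟩, ⟨0, by omega⟩⟩)
      ?_ ?_ ?_ ?_ ?_
    · intro x _
      refine Finset.mem_filter.mpr ⟨Finset.mem_product.mpr ⟨Finset.mem_univ _, Finset.mem_univ _⟩, ?_⟩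
      dsimp only
      have := x.2.isLt
      omega
    · intro p hp
      exact Finset.mem_sigma.mpr ⟨Finset.mem_univ _, Finset.mem_univ _⟩
    · intro x _
      have h1 := x.1.isLt
      have h2 := x.2.isLt
      dsimp only
      rw [dif_pos (by omega)]
      refine Sigma.ext ?_ ?_
      · apply Fin.ext
        simp only [Fin.val_mk]
        omega
      · rw [Fin.heq_ext_iff (by simp only [Fin.val_mk]; omega)]
    · intro p hp
      have hlt : (p.1:ℕ) < (p.2:ℕ) := (Finset.mem_filter.mp hp).2
      have h2 := p.2.isLt
      have hand : (p.1:ℕ) < (p.2:ℕ) ∧ (p.2:ℕ) < n0+2 := ⟨hlt, by omega⟩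
      dsimp only
      rw [dif_pos hand]
      refine Prod.ext ?_ ?_ <;>
        (apply Fin.ext; first | omega | (simp only [Fin.val_mk]; omega) | simp only [Fin.val_mk])
    · intro x _
      have h1 := x.1.isLt
      have h2 := x.2.isLt
      dsimp only
      have hcoef : ((-1:ℤ))^(1*n0) * ((-1:ℤ))^((x.1:ℕ) + ((x.1:ℕ) - (x.2:ℕ)))
          = ((-1:ℤ))^(n0+1) * ((-1:ℤ))^((x.2:ℕ)+1) := by
        rw [← pow_add, ← pow_add]
        apply neg_one_pow_parity
        omega
      rw [hcoef]
      congr 1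
      apply congrArg
      funext k
      have hk := k.isLt
      simp only [Function.update_apply, Function.comp_apply, Fin.ext_iff, Fin.val_mk]
      split_ifs <;>
        first
          | rfl
          | (exfalso; omega)
          | (exact congrArg u (Fin.ext (by
              rw [succAbove_val]
              simp only [Fin.val_mk]
              split_ifs <;> omega)))
  rw [h1, h2, h3, sub_neg_eq_add]
  abel
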